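/- Let n ≥ 1 and d, d₁ be integers with 1 ≤ d₁ < d; set a = n(d − d₁) and m = n(2d − d₁). For each j ∈ {1,…,a−1} let h_j be an integer with a ≤ h_j ≤ a + j − 1, and for each j ∈ {a,…,nd−1} let g_j be an integer with a + n⌊(j−a)/n⌋ ≤ g_j ≤ a + n⌊(j−a)/n⌋ + n − 1. Then the multiset consisting of the one-point interval [a, a], the intervals [a − j, h_j] and [h_j + 1, a + j] for j = 1,…,a−1, and the intervals [0, g_j] and [g_j + 1, a + j] for j = a,…,nd−1, is an admissible proper system with parameters m = n(2d − d₁) and σ(i) = min(n d₁ + i, m − i), consisting of exactly 2nd − 1 intervals. -/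

import Mathlib

/-- `IsProperSystem m σ S` : `S` is a *proper system* with parameters `(m, σ)`, i.e. a finite
multiset of closed intervals `[a,b]` with integer endpoints (encoded as pairs `(a,b)` of
integers, one-point intervals `a = b` allowed) contained in `[0,m]`, such that for every
integer `i ∈ [0,m]` the number of intervals of `S` containing `i`, counted with multiplicity,
equals `σ i`. -/
def IsProperSystem (m : ℤ) (σ : ℤ → ℕ) (S : Multiset (ℤ × ℤ)) : Prop :=
  (∀ I ∈ S, 0 ≤ I.1 ∧ I.1 ≤ I.2 ∧ I.2 ≤ m) ∧
  ∀ i : ℤ, 0 ≤ i → i ≤ m →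
    (S.filter fun I => I.1 ≤ i ∧ i ≤ I.2).card = σ i

/-- The *graph* of a system of intervals in `[0,m]` enumerated (with multiplicity) by
`f : Fin t → ℤ × ℤ` : its vertices are the `t` intervals (`Sum.inl j` is the `j`-th interval)
together with `m` additional vertices `w_0, …, w_{m-1}` (`Sum.inr i` is `w_i`), and `w_i` is
adjacent exactly to the intervals whose right endpoint is `i` and to the intervals whose
left endpoint is `i + 1`. -/
def systemGraph (m : ℕ) {t : ℕ} (f : Fin t → ℤ × ℤ) : SimpleGraph (Fin t ⊕ Fin m) :=
  SimpleGraph.fromRel fun u v =>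
    match u, v with
    | Sum.inl j, Sum.inr i => (f j).2 = (i : ℤ) ∨ (f j).1 = (i : ℤ) + 1
    | _, _ => False

/-- A multiset of intervals in `[0,m]` is *admissible* if its graph is a tree.  (The graph is
independent, up to isomorphism, of the chosen enumeration of the multiset.) -/
def IsAdmissible (m : ℕ) (S : Multiset (ℤ × ℤ)) : Prop :=
  ∃ (t : ℕ) (f : Fin t → ℤ × ℤ), (List.ofFn f : Multiset (ℤ × ℤ)) = S ∧
    (systemGraph m f).IsTree

/-- `IsMarkedSystem m σ t M` : `M` is a *marked admissible proper system* with parameters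
`(m, σ)` consisting of exactly `t` intervals: a finite multiset of pairs `(I, p)` where `p`
is an integer point of the interval `I`, whose multiset of first components is an admissible
proper system with parameters `(m, σ)` consisting of `t` intervals. -/
def IsMarkedSystem (m : ℕ) (σ : ℤ → ℕ) (t : ℕ) (M : Multiset ((ℤ × ℤ) × ℤ)) : Prop :=
  (∀ p ∈ M, p.1.1 ≤ p.2 ∧ p.2 ≤ p.1.2) ∧
  IsProperSystem m σ (M.map Prod.fst) ∧
  IsAdmissible m (M.map Prod.fst) ∧
  M.card = t

/-- The multiset consisting of the one-point interval `[a, a]`, the intervals `[a - j, h j]`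
and `[h j + 1, a + j]` for `j = 1, …, a - 1`, and the intervals `[0, g j]` and
`[g j + 1, a + j]` for `j = a, …, N - 1`. -/
def pentagonSystem (a N : ℕ) (h g : ℕ → ℤ) : Multiset (ℤ × ℤ) :=
  ((a : ℤ), (a : ℤ)) ::ₘ
    (((Finset.Icc 1 (a - 1)).val.bind fun j =>
        {((a : ℤ) - j, h j), (h j + 1, (a : ℤ) + j)}) +
      ((Finset.Icc a (N - 1)).val.bind fun j =>
        {((0 : ℤ), g j), (g j + 1, (a : ℤ) + j)}))

/-!
The intervals other than `[a, a]` come in pairs `[lo j, H j]`, `[H j + 1, a + j]` for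
`1 ≤ j < N = nd`, where `H = h` for `j < a`, `H = g` otherwise and `lo j = a - j` or `0`.  The
union of pair `j` is `[lo j, a + j]`, so a point `i` lies in exactly one interval of pair `j` iff
`|a - i| ≤ j`, which gives `σ i = N - |a - i|`.  For admissibility, root the graph at `w_{a-1}`:
the parent of `w_i` is `[a, a]` for `i = a`, the right interval of pair `i - a` for `i > a` and
the left interval of pair `a - 1 - i` for `i < a - 1`, and the parent of an interval is `w_{a-1}`
for `[a, a]` and `w_{H j}` for both intervals of pair `j`.  A rank function for which the parent
is the only neighbour of rank at most that of the vertex certifies that the graph is a tree.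
-/

namespace SimpleGraph

variable {V : Type*} {G : SimpleGraph V}

theorem isAcyclic_of_rank (rank : V → ℕ)
    (huniq : ∀ ⦃v u w⦄, G.Adj v u → G.Adj v w → rank u ≤ rank v → rank w ≤ rank v → u = w) :
    G.IsAcyclic := by
  classical
  intro v c hc
  obtain ⟨u, hu, hmax⟩ := c.support.toFinset.exists_max_image rank ⟨v, by simp⟩
  rw [List.mem_toFinset] at hu
  set c' := c.rotate u hu
  have hc' : c'.IsCycle := hc.rotate hu
  have hmax' : ∀ x ∈ c'.support, rank x ≤ rank u := fun x hx =>
    hmax x (List.mem_toFinset.2 ((c.mem_support_rotate_iff u hu).1 hx))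
  exact hc'.snd_ne_penultimate <| huniq (c'.adj_snd hc'.not_nil)
    (c'.adj_penultimate hc'.not_nil).symm (hmax' _ (c'.getVert_mem_support 1))
    (hmax' _ (c'.getVert_mem_support _))

theorem isTree_of_rank (rank : V → ℕ) (r : V)
    (hlower : ∀ v, v ≠ r → ∃ u, G.Adj v u ∧ rank u < rank v)
    (huniq : ∀ ⦃v u w⦄, G.Adj v u → G.Adj v w → rank u ≤ rank v → rank w ≤ rank v → u = w) :
    G.IsTree := by
  refine ⟨(connected_iff_exists_forall_reachable G).2 ⟨r, fun v => ?_⟩,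
    isAcyclic_of_rank rank huniq⟩
  induction hv : rank v using Nat.strong_induction_on generalizing v with
  | _ n ih =>
    by_cases hvr : v = r
    · rw [hvr]
    obtain ⟨u, hadj, hlt⟩ := hlower v hvr
    exact (ih _ (hv ▸ hlt) u rfl).trans hadj.symm.reachable

end SimpleGraph

section systemGraph

variable {m t : ℕ} (f : Fin t → ℤ × ℤ)

theorem systemGraph_adj_inl_inr (k : Fin t) (i : Fin m) :
    (systemGraph m f).Adj (.inl k) (.inr i) ↔ (f k).2 = i ∨ (f k).1 = i + 1 := by
  simp [systemGraph]

theorem systemGraph_not_adj_inl_inl (k k' : Fin t) :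
    ¬ (systemGraph m f).Adj (.inl k) (.inl k') := by
  simp [systemGraph]

theorem systemGraph_not_adj_inr_inr (i i' : Fin m) :
    ¬ (systemGraph m f).Adj (.inr i) (.inr i') := by
  simp [systemGraph]

end systemGraph

/-- Enumeration of the system: `0 ↦ [a, a]`, `2j - 1 ↦ [lo j, H j]`, `2j ↦ [H j + 1, a + j]`. -/
def pentagonInterval (a : ℕ) (H : ℕ → ℤ) (k : ℕ) : ℤ × ℤ :=
  if k = 0 then (a, a)
  else if k % 2 = 1 then
    (if (k + 1) / 2 < a then (a : ℤ) - ((k + 1) / 2 : ℕ) else 0, H ((k + 1) / 2))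
  else (H ((k + 1) / 2) + 1, (a : ℤ) + ((k + 1) / 2 : ℕ))

/-- With `gapRank`, this orders the vertices as `w_{a-1}, [a, a], w_a, [H 1 + 1, a + 1], w_{a+1},
…, w_{a+N-1}`, then `[lo 1, H 1], w_{a-2}, [lo 2, H 2], w_{a-3}, …`. -/
def intervalRank (N k : ℕ) : ℕ := if k % 2 = 1 then 2 * N + k else k + 1

def gapRank (a N i : ℕ) : ℕ := if a ≤ i + 1 then 2 * (i + 1 - a) else 2 * (N + a - 1 - i)

def parentGap (a : ℕ) (H : ℕ → ℤ) (k : ℕ) : ℕ := if k = 0 then a - 1 else (H ((k + 1) / 2)).toNat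

def parentInterval (a i : ℕ) : ℕ := if a ≤ i then 2 * (i - a) else 2 * (a - 1 - i) - 1

section pentagonInterval

variable {a N : ℕ} {H : ℕ → ℤ}

theorem pentagonInterval_two_mul_sub_one {j : ℕ} (hj : j ≠ 0) :
    pentagonInterval a H (2 * j - 1) = (if j < a then (a : ℤ) - j else 0, H j) := by
  rw [pentagonInterval, if_neg (by omega), if_pos (by omega), show (2 * j - 1 + 1) / 2 = j by omega]

theorem pentagonInterval_two_mul {j : ℕ} (hj : j ≠ 0) :
    pentagonInterval a H (2 * j) = (H j + 1, (a : ℤ) + j) := by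
  rw [pentagonInterval, if_neg (by omega), if_neg (by omega), show (2 * j + 1) / 2 = j by omega]

variable (hH : ∀ j, 1 ≤ j → j ≤ N - 1 → (a : ℤ) ≤ H j ∧ H j ≤ a + j - 1) {k i : ℕ}
include hH

theorem pentagonInterval_bounds (hk : k < 2 * N - 1) :
    0 ≤ (pentagonInterval a H k).1 ∧ (pentagonInterval a H k).1 ≤ (pentagonInterval a H k).2 ∧
      (pentagonInterval a H k).2 ≤ a + N := by
  by_cases hk0 : k = 0
  · simp only [pentagonInterval, if_pos hk0]
    omega
  obtain ⟨hl, hu⟩ := hH ((k + 1) / 2) (by omega) (by omega)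
  simp only [pentagonInterval, if_neg hk0]
  split_ifs <;> omega

theorem eq_parentGap (hk : k < 2 * N - 1)
    (hadj : (pentagonInterval a H k).2 = i ∨ (pentagonInterval a H k).1 = i + 1)
    (hr : gapRank a N i ≤ intervalRank N k) : i = parentGap a H k := by
  by_cases hk0 : k = 0
  · simp only [pentagonInterval, parentGap, intervalRank, gapRank, if_pos hk0] at *
    split_ifs at * <;> omega
  obtain ⟨hl, hu⟩ := hH ((k + 1) / 2) (by omega) (by omega)
  simp only [pentagonInterval, parentGap, intervalRank, gapRank, if_neg hk0] at *
  split_ifs at * <;> omega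

theorem eq_parentInterval (hk : k < 2 * N - 1)
    (hadj : (pentagonInterval a H k).2 = i ∨ (pentagonInterval a H k).1 = i + 1)
    (hr : intervalRank N k ≤ gapRank a N i) : k = parentInterval a i := by
  by_cases hk0 : k = 0
  · simp only [pentagonInterval, parentInterval, intervalRank, gapRank, if_pos hk0] at *
    split_ifs at * <;> omega
  obtain ⟨hl, hu⟩ := hH ((k + 1) / 2) (by omega) (by omega)
  simp only [pentagonInterval, parentInterval, intervalRank, gapRank, if_neg hk0] at *
  split_ifs at * <;> omega

theorem parentGap_spec (ha : 1 ≤ a) (hk : k < 2 * N - 1) :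
    parentGap a H k < a + N ∧
      ((pentagonInterval a H k).2 = parentGap a H k ∨
        (pentagonInterval a H k).1 = parentGap a H k + 1) ∧
      gapRank a N (parentGap a H k) < intervalRank N k := by
  by_cases hk0 : k = 0
  · simp only [pentagonInterval, parentGap, intervalRank, gapRank, if_pos hk0]
    split_ifs <;> omega
  obtain ⟨hl, hu⟩ := hH ((k + 1) / 2) (by omega) (by omega)
  simp only [pentagonInterval, parentGap, intervalRank, gapRank, if_neg hk0]
  split_ifs <;> omega

theorem parentInterval_spec (haN : a < N) (hi : i < a + N) (hi' : i ≠ a - 1) :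
    parentInterval a i < 2 * N - 1 ∧
      ((pentagonInterval a H (parentInterval a i)).2 = i ∨
        (pentagonInterval a H (parentInterval a i)).1 = i + 1) ∧
      intervalRank N (parentInterval a i) < gapRank a N i := by
  unfold parentInterval
  split_ifs with hai
  · by_cases hia : i = a
    · simp [pentagonInterval, intervalRank, gapRank, hia]
      omega
    obtain ⟨hl, hu⟩ := hH (i - a) (by omega) (by omega)
    rw [pentagonInterval_two_mul (by omega)]
    simp only [intervalRank, gapRank]
    split_ifs <;> omega
  · obtain ⟨hl, hu⟩ := hH (a - 1 - i) (by omega) (by omega)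
    rw [pentagonInterval_two_mul_sub_one (by omega)]
    simp only [intervalRank, gapRank]
    split_ifs <;> omega

theorem isTree_systemGraph_pentagonInterval (ha : 1 ≤ a) (haN : a < N) :
    (systemGraph (a + N) fun k : Fin (2 * N - 1) => pentagonInterval a H k).IsTree := by
  refine SimpleGraph.isTree_of_rank (Sum.elim (intervalRank N ·) (gapRank a N ·))
    (.inr ⟨a - 1, by omega⟩) ?_ ?_
  · rintro (k | i) hv
    · obtain ⟨hlt, hadj, hr⟩ := parentGap_spec hH ha k.2
      exact ⟨.inr ⟨_, hlt⟩, (systemGraph_adj_inl_inr _ _ _).2 hadj, hr⟩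
    · have hi : (i : ℕ) ≠ a - 1 := fun h => hv (congrArg Sum.inr (Fin.ext h))
      obtain ⟨hlt, hadj, hr⟩ := parentInterval_spec hH haN i.2 hi
      exact ⟨.inl ⟨_, hlt⟩, ((systemGraph_adj_inl_inr _ _ _).2 hadj).symm, hr⟩
  · rintro (k | i) (k₁ | i₁) (k₂ | i₂) h₁ h₂ hr₁ hr₂ <;>
      try simp only [systemGraph_not_adj_inl_inl, systemGraph_not_adj_inr_inr] at h₁ h₂
    · rw [systemGraph_adj_inl_inr] at h₁ h₂
      exact congrArg Sum.inr <| Fin.ext <|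
        (eq_parentGap hH k.2 h₁ hr₁).trans (eq_parentGap hH k.2 h₂ hr₂).symm
    · rw [SimpleGraph.adj_comm, systemGraph_adj_inl_inr] at h₁ h₂
      exact congrArg Sum.inl <| Fin.ext <|
        (eq_parentInterval hH k₁.2 h₁ hr₁).trans (eq_parentInterval hH k₂.2 h₂ hr₂).symm

theorem card_filter_pentagonInterval_pair {i : ℤ} (hi : 0 ≤ i) {j : ℕ} (hj : j ∈ Finset.Ico 1 N) :
    (Multiset.filter (fun I : ℤ × ℤ => I.1 ≤ i ∧ i ≤ I.2)
      {pentagonInterval a H (2 * j - 1), pentagonInterval a H (2 * j)}).card =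
      if (a - i).natAbs ≤ j then 1 else 0 := by
  rw [Finset.mem_Ico] at hj
  obtain ⟨hl, hu⟩ := hH j hj.1 (by omega)
  rw [pentagonInterval_two_mul_sub_one (by omega), pentagonInterval_two_mul (by omega),
    Multiset.insert_eq_cons, Multiset.filter_cons, Multiset.filter_singleton]
  split_ifs <;> simp_all <;> omega

end pentagonInterval

theorem List.range_two_mul_add_one (M : ℕ) :
    List.range (2 * M + 1) = 0 :: (List.range' 1 M).flatMap fun j => [2 * j - 1, 2 * j] := by
  induction M with
  | zero => rfl
  | succ M ih =>
    rw [show 2 * (M + 1) + 1 = 2 * M + 1 + 1 + 1 by ring, List.range_succ, List.range_succ, ih,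
      List.range'_concat, List.flatMap_append]
    simp [Nat.mul_add, add_comm]

section pentagonSystem

variable {a N : ℕ} {H : ℕ → ℤ}

theorem coe_ofFn_pentagonInterval (hN : 1 ≤ N) :
    (List.ofFn (fun k : Fin (2 * N - 1) => pentagonInterval a H k) : Multiset (ℤ × ℤ)) =
      ((a : ℤ), (a : ℤ)) ::ₘ (Finset.Ico 1 N).val.bind
        fun j => {pentagonInterval a H (2 * j - 1), pentagonInterval a H (2 * j)} := by
  have hrange : List.ofFn (fun k : Fin (2 * N - 1) => pentagonInterval a H k) =
      (List.range (2 * N - 1)).map (pentagonInterval a H) := by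
    rw [List.ofFn_eq_map, ← List.map_coe_finRange_eq_range, List.map_map]
    rfl
  rw [hrange, show 2 * N - 1 = 2 * (N - 1) + 1 by omega, List.range_two_mul_add_one,
    Nat.Ico_eq_range', List.map_cons, List.map_flatMap, ← Multiset.cons_coe, ← Multiset.coe_bind]
  rfl

theorem pentagonSystem_eq_bind (h g : ℕ → ℤ) (ha : 1 ≤ a) (haN : a ≤ N) :
    pentagonSystem a N h g = ((a : ℤ), (a : ℤ)) ::ₘ (Finset.Ico 1 N).val.bind fun j =>
      {pentagonInterval a (fun j => if j < a then h j else g j) (2 * j - 1),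
        pentagonInterval a (fun j => if j < a then h j else g j) (2 * j)} := by
  have hsplit :
      (Finset.Ico 1 N).val = (Finset.Icc 1 (a - 1)).val + (Finset.Icc a (N - 1)).val := by
    have e := @List.range'_append_1 1 (a - 1) (N - a)
    rw [show 1 + (a - 1) = a by omega, show a - 1 + (N - a) = N - 1 by omega] at e
    simp only [Nat.Ico_eq_range', Nat.Icc_eq_range']
    rw [show a - 1 + 1 - 1 = a - 1 by omega, show N - 1 + 1 - a = N - a by omega, ← e,
      Multiset.coe_add]
  rw [pentagonSystem, hsplit, Multiset.add_bind]
  congr 2 <;> refine Multiset.bind_congr fun j hj => ?_ <;>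
    rw [Finset.mem_val, Finset.mem_Icc] at hj <;>
    rw [pentagonInterval_two_mul_sub_one (by omega), pentagonInterval_two_mul (by omega)]
  · simp [show j < a by omega]
  · simp [show ¬ j < a by omega]

variable (hH : ∀ j, 1 ≤ j → j ≤ N - 1 → (a : ℤ) ≤ H j ∧ H j ≤ a + j - 1)
include hH

theorem card_filter_pentagonInterval (haN : a < N) {i : ℤ} (hi0 : 0 ≤ i) :
    (Multiset.filter (fun I : ℤ × ℤ => I.1 ≤ i ∧ i ≤ I.2) (((a : ℤ), (a : ℤ)) ::ₘ
      (Finset.Ico 1 N).val.bind fun j =>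
        {pentagonInterval a H (2 * j - 1), pentagonInterval a H (2 * j)})).card =
      N - (a - i).natAbs := by
  rw [Multiset.filter_cons, Multiset.card_add, Multiset.filter_bind, Multiset.card_bind,
    ← Finset.sum_eq_multiset_sum, Function.comp_def,
    Finset.sum_congr rfl fun j hj => card_filter_pentagonInterval_pair hH hi0 hj,
    Finset.sum_boole, Finset.Ico_filter_le]
  split_ifs <;> simp <;> omega

theorem isProperSystem_ofFn_pentagonInterval {m : ℤ} {σ : ℤ → ℕ} (haN : a < N)
    (hm : m = a + N) (hσ : ∀ i, 0 ≤ i → i ≤ m → σ i = N - (a - i).natAbs) :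
    IsProperSystem m σ (List.ofFn fun k : Fin (2 * N - 1) => pentagonInterval a H k) := by
  subst hm
  refine ⟨fun I hI => ?_, fun i hi0 hiN => ?_⟩
  · obtain ⟨k, rfl⟩ := List.mem_ofFn.1 (Multiset.mem_coe.1 hI)
    exact pentagonInterval_bounds hH k.2
  · rw [hσ i hi0 hiN, coe_ofFn_pentagonInterval (by omega),
      card_filter_pentagonInterval hH haN hi0]

end pentagonSystem

theorem le_add_sub_one_of_mem_block {n a j x : ℤ} (hn : 0 < n) (hna : n ≤ a) (haj : a ≤ j)
    (hx : a + n * ((j - a) / n) ≤ x ∧ x ≤ a + n * ((j - a) / n) + n - 1) :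
    a ≤ x ∧ x ≤ a + j - 1 := by
  have hle := Int.mul_ediv_self_le (x := j - a) hn.ne'
  have hnonneg : 0 ≤ n * ((j - a) / n) := mul_nonneg hn.le (Int.ediv_nonneg (by omega) hn.le)
  constructor <;> linarith [hx.1, hx.2]

/-- Let `n ≥ 1` and `1 ≤ d₁ < d`; set `a = n(d - d₁)` and `m = n(2d - d₁)`.
For `j ∈ {1, …, a-1}` let `h j` be an integer with `a ≤ h j ≤ a + j - 1`, and for
`j ∈ {a, …, nd-1}` let `g j` be an integer with
`a + n⌊(j-a)/n⌋ ≤ g j ≤ a + n⌊(j-a)/n⌋ + n - 1`.  Then the multiset consisting of the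
one-point interval `[a, a]`, the intervals `[a - j, h j]` and `[h j + 1, a + j]` for
`j = 1, …, a-1`, and the intervals `[0, g j]` and `[g j + 1, a + j]` for `j = a, …, nd-1`,
is an admissible proper system with parameters `m = n(2d - d₁)` and
`σ(i) = min(n d₁ + i, m - i)`, consisting of exactly `2nd - 1` intervals. -/
theorem statement7 (n d d₁ : ℕ) (hn : 1 ≤ n) (hd₁ : 1 ≤ d₁) (hd : d₁ < d) (h g : ℕ → ℤ)
    (hh : ∀ j : ℕ, 1 ≤ j → j ≤ n * (d - d₁) - 1 →
      (n * (d - d₁) : ℤ) ≤ h j ∧ h j ≤ (n * (d - d₁) : ℤ) + j - 1)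
    (hg : ∀ j : ℕ, n * (d - d₁) ≤ j → j ≤ n * d - 1 →
      (n * (d - d₁) + n * ((j - n * (d - d₁)) / n) : ℤ) ≤ g j ∧
        g j ≤ (n * (d - d₁) + n * ((j - n * (d - d₁)) / n) : ℤ) + n - 1) :
    IsProperSystem (n * (2 * d - d₁))
        (fun i : ℤ => (min ((n : ℤ) * d₁ + i) ((n * (2 * d - d₁) : ℕ) - i)).toNat)
        (pentagonSystem (n * (d - d₁)) (n * d) h g) ∧
      IsAdmissible (n * (2 * d - d₁)) (pentagonSystem (n * (d - d₁)) (n * d) h g) ∧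
      (pentagonSystem (n * (d - d₁)) (n * d) h g).card = 2 * (n * d) - 1 := by
  set a := n * (d - d₁)
  set N := n * d
  set H : ℕ → ℤ := fun j => if j < a then h j else g j
  have ha : n ≤ a := Nat.le_mul_of_pos_right n (by omega)
  have haN : a < N := Nat.mul_lt_mul_of_pos_left (by omega) (by omega)
  have hm : n * (2 * d - d₁) = a + N := by rw [← Nat.mul_add]; congr 1; omega
  have ha_cast : (n : ℤ) * (d - d₁) = a := by push_cast [a, Nat.cast_sub hd.le]; rfl
  have hH : ∀ j, 1 ≤ j → j ≤ N - 1 → (a : ℤ) ≤ H j ∧ H j ≤ a + j - 1 := by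
    intro j hj1 hjN
    by_cases hja : j < a
    · simpa [H, hja, ha_cast] using hh j hj1 (by omega)
    · have hgj := hg j (by omega) (by omega)
      rw [ha_cast] at hgj
      simpa [H, hja] using le_add_sub_one_of_mem_block (by omega) (by omega) (by omega) hgj
  have hS : pentagonSystem a N h g =
      List.ofFn fun k : Fin (2 * N - 1) => pentagonInterval a H k :=
    (pentagonSystem_eq_bind h g (by omega) haN.le).trans
      (coe_ofFn_pentagonInterval (by omega)).symm
  refine ⟨hS ▸ isProperSystem_ofFn_pentagonInterval hH haN
      (by push_cast [N, ← ha_cast]; ring) fun i _ _ => ?_,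
    ⟨_, _, hS.symm, hm ▸ isTree_systemGraph_pentagonInterval hH (by omega) haN⟩, by simp [hS]⟩
  have hd₁_cast : (n : ℤ) * d₁ = N - a := by push_cast [N, ← ha_cast]; ring
  rw [hd₁_cast, hm]
  omega
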